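/- Let p be a prime, G a group, and d ≥ 0. Suppose there is an injective homomorphism ι : ℤ/pℤ → A of (ℤ/pℤ)[G]-modules, where ℤ/pℤ carries the trivial G-action, and suppose A has projective dimension at most d as a (ℤ/pℤ)[G]-module. Then every injective (ℤ/pℤ)[G]-module has projective dimension at most d. -/

import Mathlib

/-!
Let `a ∈ A` be the image of `1 ∈ ℤ/pℤ`: a nonzero `G`-invariant vector. For an injective
module `I`, the map `x ↦ x ⊗ a` embeds `I` into `I ⊗ A` (diagonal action, tensor product
over the field `ℤ/pℤ`), and injectivity of `I` splits it, so `I` is a retract of `I ⊗ A`.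
Tensoring over a field with `I` is exact and, being left adjoint to the internal Hom (which
preserves surjections), preserves projectives; it therefore turns a length-`d` projective
resolution of `A` into one of `I ⊗ A`. Finally, a resolution of length `d` exists exactly when
`Ext^i(-, ·)` vanishes for `i > d`, and that condition passes to retracts.
-/

open CategoryTheory

noncomputable section

/-- The group algebra `(ℤ/pℤ)[G]`. -/
abbrev GroupAlg (p : ℕ) (G : Type) [Group G] : Type := MonoidAlgebra (ZMod p) G

/-- The trivial `(ℤ/pℤ)[G]`-module `ℤ/pℤ`: the module `ℤ/pℤ` with the module structure
obtained by restricting scalars along the augmentation `(ℤ/pℤ)[G] →+* ℤ/pℤ`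
(so that every element of `G` acts as the identity). -/
def TrivMod (p : ℕ) (G : Type) [Group G] : ModuleCat.{0} (GroupAlg p G) :=
  (ModuleCat.restrictScalars
      ((MonoidAlgebra.lift (ZMod p) (ZMod p) G) 1).toRingHom).obj
    (ModuleCat.of (ZMod p) (ZMod p))

/-- `A` has projective dimension at most `d` over `R`:  there is an exact resolution
`0 ⟶ Q d ⟶ ⋯ ⟶ Q 0 ⟶ A ⟶ 0` with all the `Q i` projective. -/
def HasProjDimLE {R : Type} [Ring R] (A : ModuleCat.{0} R) (d : ℕ) : Prop :=
  ∃ (Q : ℕ → ModuleCat.{0} R) (f : ∀ i, Q (i + 1) ⟶ Q i) (g : Q 0 ⟶ A),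
    (∀ i, Projective (Q i)) ∧
    Function.Surjective g ∧
    Function.Exact (f 0) g ∧
    (∀ i, Function.Exact (f (i + 1)) (f i)) ∧
    (∀ i, d < i → Subsingleton (Q i))

universe u

open MonoidalCategory

section Resolution

variable {R : Type} [Ring R]

theorem hasProjDimLE_zero_iff (M : ModuleCat.{0} R) : HasProjDimLE M 0 ↔ Projective M := by
  constructor
  · rintro ⟨Q, f, g, hQ, hg, hfg, -, hQ0⟩
    have : Subsingleton (Q 1) := hQ0 1 one_pos
    have hg_inj : Function.Injective g := by
      rw [injective_iff_map_eq_zero]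
      intro x hx
      obtain ⟨y, rfl⟩ := (hfg x).mp hx
      rw [Subsingleton.elim y 0, map_zero]
    have : IsIso g := (ConcreteCategory.isIso_iff_bijective g).mpr ⟨hg_inj, hg⟩
    exact Projective.of_iso (asIso g) (hQ 0)
  · intro hM
    refine ⟨fun i => Nat.casesOn i M fun _ => ModuleCat.of R PUnit, fun _ => 0, 𝟙 M,
      fun i => ?_, fun x => ⟨x, rfl⟩, fun x => ?_, fun i x => ?_, fun i hi => ?_⟩
    · cases i
      · exact hM
      · exact Projective.of_iso (ModuleCat.isZero_of_subsingleton _).isoZero.symm inferInstance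
    · simp [eq_comm]
    · simp [Subsingleton.elim x 0]
    · cases i
      · exact absurd hi (lt_irrefl 0)
      · exact inferInstanceAs (Subsingleton PUnit)

theorem hasProjDimLE_succ_iff (M : ModuleCat.{0} R) (d : ℕ) :
    HasProjDimLE M (d + 1) ↔ ∃ (P : ModuleCat.{0} R) (π : P ⟶ M), Projective P ∧
      Function.Surjective π ∧ HasProjDimLE (ModuleCat.of R (LinearMap.ker π.hom)) d := by
  constructor
  · rintro ⟨Q, f, g, hQ, hg, hfg, hf, hQ0⟩
    have hf0 : ∀ x, f 0 x ∈ LinearMap.ker g.hom := fun x => (hfg _).mpr ⟨x, rfl⟩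
    refine ⟨Q 0, g, hQ 0, hg, fun i => Q (i + 1), fun i => f (i + 1),
      ModuleCat.ofHom ((f 0).hom.codRestrict _ hf0), fun i => hQ (i + 1), ?_, ?_,
      fun i => hf (i + 1), fun i hi => hQ0 (i + 1) (by omega)⟩
    · rintro ⟨x, hx⟩
      obtain ⟨y, rfl⟩ := (hfg x).mp hx
      exact ⟨y, rfl⟩
    · intro x
      simpa [Subtype.ext_iff] using hf 0 x
  · rintro ⟨P, π, hP, hπ, Q, f, g, hQ, hg, hfg, hf, hQ0⟩
    refine ⟨fun i => Nat.casesOn i P Q,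
      fun i => Nat.casesOn i (ModuleCat.ofHom ((LinearMap.ker π.hom).subtype ∘ₗ g.hom)) f, π,
      fun i => Nat.casesOn i hP hQ, hπ, fun x => ?_, fun i => ?_,
      fun i hi => ?_⟩
    · constructor
      · intro hx
        obtain ⟨y, hy⟩ := hg ⟨x, hx⟩
        exact ⟨y, congrArg Subtype.val hy⟩
      · rintro ⟨y, rfl⟩
        exact (g y).2
    · cases i
      · intro y
        show ((g y : P) = 0) ↔ _
        rw [ZeroMemClass.coe_eq_zero]
        exact hfg y
      · exact hf _
    · obtain _ | i := i
      · omega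
      · exact hQ0 i (by omega)

theorem hasProjectiveDimensionLE_succ_iff_ker {M P : ModuleCat.{0} R} [Projective P] (π : P ⟶ M)
    (hπ : Function.Surjective π) (d : ℕ) :
    HasProjectiveDimensionLE M (d + 1) ↔
      HasProjectiveDimensionLE (ModuleCat.of R (LinearMap.ker π.hom)) d :=
  (π.hom.shortExact_shortComplexKer hπ).hasProjectiveDimensionLT_X₃_iff d ‹_›

theorem hasProjDimLE_iff_hasProjectiveDimensionLE (M : ModuleCat.{0} R) (d : ℕ) :
    HasProjDimLE M d ↔ HasProjectiveDimensionLE M d := by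
  induction d generalizing M with
  | zero => exact (hasProjDimLE_zero_iff M).trans (projective_iff_hasProjectiveDimensionLE_zero M)
  | succ d ih =>
    constructor
    · intro hM
      obtain ⟨P, π, hP, hπ, hK⟩ := (hasProjDimLE_succ_iff M d).mp hM
      exact (hasProjectiveDimensionLE_succ_iff_ker π hπ d).mpr ((ih _).mp hK)
    · intro hM
      have hπ : Function.Surjective (Projective.π M) :=
        (ModuleCat.epi_iff_surjective _).mp inferInstance
      exact (hasProjDimLE_succ_iff M d).mpr ⟨_, _, inferInstance, hπ,
        (ih _).mpr ((hasProjectiveDimensionLE_succ_iff_ker _ hπ d).mp hM)⟩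

theorem HasProjDimLE.of_retract {M N : ModuleCat.{0} R} (h : Retract M N) {d : ℕ}
    (hN : HasProjDimLE N d) : HasProjDimLE M d := by
  rw [hasProjDimLE_iff_hasProjectiveDimensionLE] at hN ⊢
  exact h.hasProjectiveDimensionLT (d + 1)

theorem HasProjDimLE.map {S : Type} [Ring S] (F : ModuleCat.{0} R ⥤ ModuleCat.{0} S)
    [F.PreservesZeroMorphisms] [F.PreservesProjectiveObjects]
    (hF_exact : ∀ {X Y Z : ModuleCat.{0} R} (f : X ⟶ Y) (g : Y ⟶ Z),
      Function.Exact f g → Function.Exact (F.map f) (F.map g))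
    (hF_surj : ∀ {X Y : ModuleCat.{0} R} (f : X ⟶ Y),
      Function.Surjective f → Function.Surjective (F.map f))
    {M : ModuleCat.{0} R} {d : ℕ} (hM : HasProjDimLE M d) : HasProjDimLE (F.obj M) d := by
  obtain ⟨Q, f, g, hQ, hg, hfg, hf, hQ0⟩ := hM
  refine ⟨fun i => F.obj (Q i), fun i => F.map (f i), F.map g,
    fun i => F.projective_obj_of_projective (hQ i), hF_surj g hg, hF_exact _ _ hfg,
    fun i => hF_exact _ _ (hf i), fun i hi => ?_⟩
  have := hQ0 i hi
  exact ModuleCat.isZero_iff_subsingleton.mp (F.map_isZero (ModuleCat.isZero_of_subsingleton _))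

end Resolution

theorem TensorProduct.tmul_left_injective {k V W : Type*} [Field k] [AddCommGroup V] [Module k V]
    [AddCommGroup W] [Module k W] {w : W} (hw : w ≠ 0) :
    Function.Injective fun v : V => v ⊗ₜ[k] w := by
  have : (fun v : V => v ⊗ₜ[k] w) =
      (LinearMap.lTensor V (LinearMap.toSpanSingleton k W w)) ∘ (TensorProduct.rid k V).symm := by
    ext v
    simp
  rw [this]
  exact (Module.Flat.lTensor_preserves_injective_linearMap _
    (LinearMap.ker_eq_bot.mp (LinearMap.ker_toSpanSingleton k hw))).comp
    (TensorProduct.rid k V).symm.injective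

namespace Rep

theorem ofModuleMonoidAlgebra_ρ_apply {k G : Type u} [CommRing k] [Monoid G]
    (M : ModuleCat.{u} (MonoidAlgebra k G)) (g : G) (x : M) :
    (ofModuleMonoidAlgebra.obj M).ρ g x = MonoidAlgebra.single g (1 : k) • x :=
  rfl

variable {k G : Type u} [Field k] [Group G]

instance (V : Rep.{u} k G) : (ihom V).PreservesEpimorphisms where
  preserves {X Y} f hf := by
    rw [Rep.epi_iff_surjective] at hf ⊢
    exact fun φ => Module.projective_lifting_property _ (φ : V.V →ₗ[k] Y.V) hf

instance (V : Rep.{u} k G) : (tensorLeft V).PreservesProjectiveObjects :=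
  Functor.preservesProjectiveObjects_of_adjunction_of_preservesEpimorphisms (ihom.adjunction V)

def tmulInvariant (V : Rep.{u} k G) {W : Rep.{u} k G} {w : W} (hw : ∀ g, W.ρ g w = w) :
    V ⟶ V ⊗ W :=
  Rep.ofHom ⟨(TensorProduct.mk k V W).flip w, fun g => by ext v; simp [hw g]⟩

theorem mono_tmulInvariant (V : Rep.{u} k G) {W : Rep.{u} k G} {w : W} (hw : ∀ g, W.ρ g w = w)
    (hw0 : w ≠ 0) : Mono (tmulInvariant V hw) :=
  (Rep.mono_iff_injective _).mpr (TensorProduct.tmul_left_injective hw0)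

abbrev tensorLeftModule (V : Rep.{u} k G) :
    ModuleCat.{u} (MonoidAlgebra k G) ⥤ ModuleCat.{u} (MonoidAlgebra k G) :=
  ofModuleMonoidAlgebra ⋙ tensorLeft V ⋙ toModuleMonoidAlgebra

theorem tensorLeftModule_map_exact (V : Rep.{u} k G) {X Y Z : ModuleCat.{u} (MonoidAlgebra k G)}
    (f : X ⟶ Y) (g : Y ⟶ Z) (hfg : Function.Exact f g) :
    Function.Exact ((tensorLeftModule V).map f) ((tensorLeftModule V).map g) :=
  Module.Flat.lTensor_exact V.V (f := (ofModuleMonoidAlgebra.map f).hom.toLinearMap)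
    (g := (ofModuleMonoidAlgebra.map g).hom.toLinearMap) hfg

theorem tensorLeftModule_map_surjective (V : Rep.{u} k G) {X Y : ModuleCat.{u} (MonoidAlgebra k G)}
    (f : X ⟶ Y) (hf : Function.Surjective f) :
    Function.Surjective ((tensorLeftModule V).map f) :=
  LinearMap.lTensor_surjective V.V (g := (ofModuleMonoidAlgebra.map f).hom.toLinearMap) hf

end Rep

open Rep in
theorem hasProjDimLE_of_injective_of_invariant {k G : Type} [Field k] [Group G]
    {A : ModuleCat.{0} (MonoidAlgebra k G)} {a : A}
    (ha_inv : ∀ g : G, MonoidAlgebra.single g (1 : k) • a = a) (ha : a ≠ 0) {d : ℕ}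
    (hA : HasProjDimLE A d) (I : ModuleCat.{0} (MonoidAlgebra k G)) [Injective I] :
    HasProjDimLE I d := by
  have hρ : ∀ g, (ofModuleMonoidAlgebra.obj A).ρ g a = a := fun g =>
    (ofModuleMonoidAlgebra_ρ_apply A g a).trans (ha_inv g)
  set V := ofModuleMonoidAlgebra.obj I
  let s : I ⟶ (tensorLeftModule V).obj A :=
    (equivalenceModuleMonoidAlgebra.counitIso.app I).inv ≫
      toModuleMonoidAlgebra.map (tmulInvariant V hρ)
  -- instance search does not see `(ofModuleMonoidAlgebra ⋙ toModuleMonoidAlgebra).obj I` as an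
  -- object in the image of `toModuleMonoidAlgebra`, so `Functor.map_mono` is applied by hand
  have : Mono s := @mono_comp _ _ _ _ _ _ inferInstance _
    (@Functor.map_mono _ _ _ _ toModuleMonoidAlgebra _ _ _ _ (mono_tmulInvariant V hρ ha))
  exact .of_retract ⟨s, Injective.factorThru (𝟙 I) s, Injective.comp_factorThru _ _⟩
    (hA.map _ (tensorLeftModule_map_exact V) (tensorLeftModule_map_surjective V))

instance (p : ℕ) [Fact p.Prime] (G : Type) [Group G] : Nontrivial (TrivMod p G) :=
  inferInstanceAs (Nontrivial (ZMod p))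

theorem trivMod_single_smul (p : ℕ) (G : Type) [Group G] (g : G) (x : TrivMod p G) :
    (MonoidAlgebra.single g 1 : GroupAlg p G) • x = x := by
  change MonoidAlgebra.lift (ZMod p) (ZMod p) G 1 (MonoidAlgebra.single g 1) •
    (show ZMod p from x) = x
  simp only [MonoidAlgebra.lift_single, MonoidHom.one_apply, one_smul]
  exact one_mul (show ZMod p from x)

/-- If there is an injective homomorphism `ι : ℤ/pℤ → A` of
`(ℤ/pℤ)[G]`-modules out of the trivial module, and `A` has projective dimension at most
`d`, then every injective `(ℤ/pℤ)[G]`-module has projective dimension at most `d`. -/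
theorem injective_hasProjDimLE_of_trivMod_embeds
    (p : ℕ) (hp : p.Prime) (G : Type) [Group G] (d : ℕ)
    (A : ModuleCat.{0} (GroupAlg p G))
    (ι : TrivMod p G ⟶ A) (hι : Function.Injective ι)
    (hA : HasProjDimLE A d) :
    ∀ I : ModuleCat.{0} (GroupAlg p G), Injective I → HasProjDimLE I d := by
  have := Fact.mk hp
  intro I hI
  obtain ⟨x, hx⟩ := exists_ne (0 : TrivMod p G)
  exact hasProjDimLE_of_injective_of_invariant (a := ι x)
    (fun g => by rw [← map_smul, trivMod_single_smul]) ((map_ne_zero_iff _ hι).mpr hx) hA I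

end
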